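/- Let (f*,g*) be potentials. Then the measure π_ε on ℝ^d × ℝ^d defined by dπ_ε/d(P⊗Q)(x,y) := (1/ε)(f*(x)+g*(y)−c(x,y))₊ is a coupling, i.e., π_ε ∈ Π(P,Q), and π_ε is the unique minimizer of the primal problem QOT_ε(P,Q). -/

import Mathlib

/-!
Write `μ = P ⊗ Q`, `φ = c` and `ψ = f ⊕ g`, where `f`, `g` are Lipschitz extensions of `f*`, `g*`
to the whole space, and `s = (ψ - φ)₊ / ε`. The first-order conditions say that `s` integrates to
`1` in each variable, so `s • μ` is a coupling. For any coupling `π = r • μ` one has pointwise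
`φ r + (ε/2) r² = φ s + (ε/2) s² + ((ε/2)(r - s)² + (φ - ψ)₊ r) + ψ (r - s)`,
and `∫ ψ (r - s) dμ = 0` because both couplings have the marginals `P` and `Q`. So the cost of `π`
exceeds that of `s • μ` by the integral of a nonnegative excess, which vanishes only if `r = s`
`μ`-a.e.
-/

open MeasureTheory Metric
open scoped ENNReal

/-- The primal QOT cost of a coupling `π` (for `π ≪ P ⊗ Q`). -/
noncomputable def primalCost {d : ℕ} (ε : ℝ) (P Q : Measure (EuclideanSpace ℝ (Fin d)))
    (c : EuclideanSpace ℝ (Fin d) → EuclideanSpace ℝ (Fin d) → ℝ)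
    (π : Measure (EuclideanSpace ℝ (Fin d) × EuclideanSpace ℝ (Fin d))) : ℝ :=
  (∫ p, c p.1 p.2 ∂π) + (ε / 2) * ∫ p, ((π.rnDeriv (P.prod Q) p).toReal) ^ 2 ∂(P.prod Q)

/-- Feasible couplings: elements of `Π(P,Q)` that are absolutely continuous w.r.t. `P ⊗ Q`
with square-integrable density (all other couplings have primal cost `+∞` by convention). -/
def IsFeasible {d : ℕ} (P Q : Measure (EuclideanSpace ℝ (Fin d)))
    (π : Measure (EuclideanSpace ℝ (Fin d) × EuclideanSpace ℝ (Fin d))) : Prop :=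
  IsProbabilityMeasure π ∧ π.fst = P ∧ π.snd = Q ∧ π ≪ P.prod Q ∧
    MemLp (fun p => (π.rnDeriv (P.prod Q) p).toReal) 2 (P.prod Q)

/-- The candidate optimal coupling `π_ε` with density `(1/ε)(f*(x)+g*(y)-c(x,y))₊`. -/
noncomputable def piEps {d : ℕ} (ε : ℝ) (P Q : Measure (EuclideanSpace ℝ (Fin d)))
    (c : EuclideanSpace ℝ (Fin d) → EuclideanSpace ℝ (Fin d) → ℝ)
    (fStar gStar : EuclideanSpace ℝ (Fin d) → ℝ) :
    Measure (EuclideanSpace ℝ (Fin d) × EuclideanSpace ℝ (Fin d)) :=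
  (P.prod Q).withDensity fun p =>
    ENNReal.ofReal ((1 / ε) * max (fStar p.1 + gStar p.2 - c p.1 p.2) 0)

lemma Continuous.memLp_top_of_ae_mem_compact {α E : Type*} [TopologicalSpace α]
    [MeasurableSpace α] [OpensMeasurableSpace α] [NormedAddCommGroup E] [SecondCountableTopology E]
    {μ : Measure α} {f : α → E} {K : Set α} (hf : Continuous f) (hK : IsCompact K)
    (h : ∀ᵐ p ∂μ, p ∈ K) : MemLp f ∞ μ := by
  obtain ⟨C, hC⟩ := hK.exists_bound_of_continuousOn hf.continuousOn
  exact memLp_top_of_bound hf.aestronglyMeasurable C (h.mono hC)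

lemma lintegral_ofReal_one_div_mul_eq_one {Y : Type*} [MeasurableSpace Y] {Q : Measure Y}
    {ε : ℝ} {f : Y → ℝ} (hε : 0 < ε) (hf0 : ∀ y, 0 ≤ f y) (hf : ∫ y, f y ∂Q = ε) :
    ∫⁻ y, ENNReal.ofReal (1 / ε * f y) ∂Q = 1 := by
  have hint : Integrable f Q := Integrable.of_integral_ne_zero (hf ▸ hε.ne')
  rw [← ofReal_integral_eq_lintegral_ofReal (hint.const_mul _)
      (ae_of_all _ fun y => mul_nonneg (by positivity) (hf0 y)),
    integral_const_mul, hf, one_div_mul_cancel hε.ne', ENNReal.ofReal_one]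

noncomputable section

variable {α : Type*} {ε : ℝ} {φ ψ r : α → ℝ}

def qotDensity (ε : ℝ) (φ ψ : α → ℝ) (p : α) : ℝ := (1 / ε) * max (ψ p - φ p) 0

def qotExcess (ε : ℝ) (φ ψ r : α → ℝ) (p : α) : ℝ :=
  ε / 2 * (r p - qotDensity ε φ ψ p) ^ 2 + max (φ p - ψ p) 0 * r p

lemma qotDensity_nonneg (hε : 0 ≤ ε) (p : α) : 0 ≤ qotDensity ε φ ψ p :=
  mul_nonneg (one_div_nonneg.2 hε) (le_max_right _ _)

lemma qotExcess_nonneg (hε : 0 ≤ ε) {p : α} (hr : 0 ≤ r p) : 0 ≤ qotExcess ε φ ψ r p :=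
  add_nonneg (by positivity) (mul_nonneg (le_max_right _ _) hr)

lemma eq_qotDensity_of_qotExcess_eq_zero (hε : 0 < ε) {p : α} (hr : 0 ≤ r p)
    (h : qotExcess ε φ ψ r p = 0) : r p = qotDensity ε φ ψ p := by
  have hsq := ((add_eq_zero_iff_of_nonneg (by positivity)
    (mul_nonneg (le_max_right _ _) hr)).1 h).1
  simpa [hε.ne', sub_eq_zero] using hsq

lemma quadCost_integrand_eq (hε : ε ≠ 0) (p : α) :
    φ p * r p + ε / 2 * r p ^ 2 =
      (φ p * qotDensity ε φ ψ p + ε / 2 * qotDensity ε φ ψ p ^ 2) + qotExcess ε φ ψ r p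
        + ψ p * (r p - qotDensity ε φ ψ p) := by
  simp only [qotExcess, qotDensity]
  rcases le_total (ψ p - φ p) 0 with h | h
  · rw [max_eq_right h, max_eq_left (by linarith)]
    ring
  · rw [max_eq_left h, max_eq_right (by linarith)]
    field_simp
    ring

variable [MeasurableSpace α] {μ π : Measure α}

def quadCost (μ : Measure α) (ε : ℝ) (φ : α → ℝ) (π : Measure α) : ℝ :=
  (∫ p, φ p ∂π) + (ε / 2) * ∫ p, (π.rnDeriv μ p).toReal ^ 2 ∂μ

def qotMeasure (μ : Measure α) (ε : ℝ) (φ ψ : α → ℝ) : Measure α :=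
  μ.withDensity fun p => ENNReal.ofReal (qotDensity ε φ ψ p)

instance [SigmaFinite μ] : SigmaFinite (qotMeasure μ ε φ ψ) :=
  SigmaFinite.withDensity_ofReal _

lemma measurable_qotDensity (hφ : Measurable φ) (hψ : Measurable ψ) :
    Measurable (qotDensity ε φ ψ) :=
  ((hψ.sub hφ).max measurable_const).const_mul _

lemma memLp_top_qotDensity (hφ : MemLp φ ∞ μ) (hψ : MemLp ψ ∞ μ) :
    MemLp (qotDensity ε φ ψ) ∞ μ :=
  (hψ.sub hφ).pos_part.const_mul _

lemma toReal_rnDeriv_qotMeasure [SigmaFinite μ] (hε : 0 ≤ ε) (hφ : MemLp φ ∞ μ)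
    (hψ : MemLp ψ ∞ μ) :
    (fun p => ((qotMeasure μ ε φ ψ).rnDeriv μ p).toReal) =ᵐ[μ] qotDensity ε φ ψ := by
  have hs := (memLp_top_qotDensity (ε := ε) hφ hψ).1.aemeasurable
  filter_upwards [Measure.rnDeriv_withDensity₀ μ hs.ennreal_ofReal] with p hp
  rw [qotMeasure, hp, ENNReal.toReal_ofReal (qotDensity_nonneg hε p)]

lemma memLp_rnDeriv_qotMeasure [IsFiniteMeasure μ] (hε : 0 ≤ ε) (hφ : MemLp φ ∞ μ)
    (hψ : MemLp ψ ∞ μ) :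
    MemLp (fun p => ((qotMeasure μ ε φ ψ).rnDeriv μ p).toReal) 2 μ :=
  ((memLp_top_qotDensity hφ hψ).mono_exponent le_top).ae_eq
    (toReal_rnDeriv_qotMeasure hε hφ hψ).symm

lemma integrable_qotExcess [IsFiniteMeasure μ] (hφ : MemLp φ ∞ μ) (hψ : MemLp ψ ∞ μ)
    (hr : MemLp r 2 μ) : Integrable (qotExcess ε φ ψ r) μ :=
  ((hr.sub ((memLp_top_qotDensity hφ hψ).mono_exponent le_top)).integrable_sq.const_mul _).add
    ((hr.integrable one_le_two).mul_of_top_right (hφ.sub hψ).pos_part)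

lemma integral_eq_integral_mul_of_rnDeriv_ae_eq [SigmaFinite μ] [SigmaFinite π] (hπ : π ≪ μ)
    (hπr : (fun p => (π.rnDeriv μ p).toReal) =ᵐ[μ] r) (f : α → ℝ) :
    ∫ p, f p ∂π = ∫ p, f p * r p ∂μ := by
  rw [← integral_toReal_rnDeriv_mul hπ]
  refine integral_congr_ae ?_
  filter_upwards [hπr] with p hp
  rw [hp, mul_comm]

lemma quadCost_eq_integral [IsFiniteMeasure μ] [SigmaFinite π] (hπ : π ≪ μ) (hφ : MemLp φ ∞ μ)
    (hr : MemLp r 2 μ) (hπr : (fun p => (π.rnDeriv μ p).toReal) =ᵐ[μ] r) :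
    quadCost μ ε φ π = ∫ p, φ p * r p + ε / 2 * r p ^ 2 ∂μ := by
  have hsq : ∫ p, (π.rnDeriv μ p).toReal ^ 2 ∂μ = ∫ p, r p ^ 2 ∂μ :=
    integral_congr_ae (by filter_upwards [hπr] with p hp; rw [hp])
  rw [quadCost, integral_eq_integral_mul_of_rnDeriv_ae_eq hπ hπr, hsq, ← integral_const_mul]
  exact (integral_add ((hr.integrable one_le_two).mul_of_top_right hφ)
    (hr.integrable_sq.const_mul _)).symm

lemma quadCost_eq_quadCost_qotMeasure_add [IsFiniteMeasure μ] [SigmaFinite π] (hε : 0 < ε)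
    (hφ : MemLp φ ∞ μ) (hψ : MemLp ψ ∞ μ) (hπ : π ≪ μ)
    (hr : MemLp (fun p => (π.rnDeriv μ p).toReal) 2 μ)
    (hψπ : ∫ p, ψ p ∂π = ∫ p, ψ p ∂qotMeasure μ ε φ ψ) :
    quadCost μ ε φ π = quadCost μ ε φ (qotMeasure μ ε φ ψ)
      + ∫ p, qotExcess ε φ ψ (fun p => (π.rnDeriv μ p).toReal) p ∂μ := by
  set r := fun p => (π.rnDeriv μ p).toReal
  set s := qotDensity ε φ ψ
  have hs : MemLp s 2 μ := (memLp_top_qotDensity hφ hψ).mono_exponent le_top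
  have hsπ := toReal_rnDeriv_qotMeasure hε.le hφ hψ
  have hπ₀ : qotMeasure μ ε φ ψ ≪ μ := withDensity_absolutelyContinuous _ _
  have hψs : Integrable (fun p => ψ p * s p) μ := (hs.integrable one_le_two).mul_of_top_right hψ
  have hψr : Integrable (fun p => ψ p * r p) μ := (hr.integrable one_le_two).mul_of_top_right hψ
  have hψ0 : ∫ p, ψ p * (r p - s p) ∂μ = 0 := by
    rw [integral_eq_integral_mul_of_rnDeriv_ae_eq hπ (ae_eq_refl _),
      integral_eq_integral_mul_of_rnDeriv_ae_eq hπ₀ hsπ] at hψπ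
    simp_rw [mul_sub]
    rw [integral_sub hψr hψs, hψπ, sub_self]
  have hcost₀ : Integrable (fun p => φ p * s p + ε / 2 * s p ^ 2) μ :=
    ((hs.integrable one_le_two).mul_of_top_right hφ).add (hs.integrable_sq.const_mul _)
  have hexc := integrable_qotExcess (ε := ε) hφ hψ hr
  have hcost₀exc : Integrable (fun p => φ p * s p + ε / 2 * s p ^ 2 + qotExcess ε φ ψ r p) μ :=
    hcost₀.add hexc
  have hψrs : Integrable (fun p => ψ p * (r p - s p)) μ :=
    (hψr.sub hψs).congr (ae_of_all _ fun p => (mul_sub _ _ _).symm)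
  rw [quadCost_eq_integral hπ hφ hr (ae_eq_refl _), quadCost_eq_integral hπ₀ hφ hs hsπ,
    integral_congr_ae (ae_of_all _ (quadCost_integrand_eq (ψ := ψ) hε.ne')),
    integral_add hcost₀exc hψrs, integral_add hcost₀ hexc, hψ0, add_zero]

lemma quadCost_qotMeasure_le [IsFiniteMeasure μ] [SigmaFinite π] (hε : 0 < ε)
    (hφ : MemLp φ ∞ μ) (hψ : MemLp ψ ∞ μ) (hπ : π ≪ μ)
    (hr : MemLp (fun p => (π.rnDeriv μ p).toReal) 2 μ)
    (hψπ : ∫ p, ψ p ∂π = ∫ p, ψ p ∂qotMeasure μ ε φ ψ) :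
    quadCost μ ε φ (qotMeasure μ ε φ ψ) ≤ quadCost μ ε φ π := by
  rw [quadCost_eq_quadCost_qotMeasure_add hε hφ hψ hπ hr hψπ]
  exact le_add_of_nonneg_right
    (integral_nonneg fun p => qotExcess_nonneg hε.le ENNReal.toReal_nonneg)

lemma eq_qotMeasure_of_quadCost_eq [IsFiniteMeasure μ] [SigmaFinite π] (hε : 0 < ε)
    (hφ : MemLp φ ∞ μ) (hψ : MemLp ψ ∞ μ) (hπ : π ≪ μ)
    (hr : MemLp (fun p => (π.rnDeriv μ p).toReal) 2 μ)
    (hψπ : ∫ p, ψ p ∂π = ∫ p, ψ p ∂qotMeasure μ ε φ ψ)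
    (h : quadCost μ ε φ π = quadCost μ ε φ (qotMeasure μ ε φ ψ)) :
    π = qotMeasure μ ε φ ψ := by
  rw [quadCost_eq_quadCost_qotMeasure_add hε hφ hψ hπ hr hψπ, add_eq_left] at h
  have hexc : qotExcess ε φ ψ (fun p => (π.rnDeriv μ p).toReal) =ᵐ[μ] 0 := by
    refine (integral_eq_zero_iff_of_nonneg (fun _ => ?_) (integrable_qotExcess hφ hψ hr)).1 h
    exact qotExcess_nonneg hε.le ENNReal.toReal_nonneg
  refine (Measure.withDensity_rnDeriv_eq π μ hπ).symm.trans (withDensity_congr_ae ?_)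
  filter_upwards [Measure.rnDeriv_lt_top π μ, hexc] with p hfin hp
  rw [← eq_qotDensity_of_qotExcess_eq_zero (r := fun p => (π.rnDeriv μ p).toReal) hε
    ENNReal.toReal_nonneg hp, ENNReal.ofReal_toReal hfin.ne]

end

section Marginals

variable {X Y : Type*} [MeasurableSpace X] [MeasurableSpace Y] {P : Measure X} {Q : Measure Y}

lemma fst_withDensity_prod [SFinite P] [SFinite Q] {D : X × Y → ℝ≥0∞} (hD : Measurable D)
    (h : ∀ᵐ x ∂P, ∫⁻ y, D (x, y) ∂Q = 1) : ((P.prod Q).withDensity D).fst = P := by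
  ext s hs
  rw [Measure.fst_apply hs, ← Set.prod_univ, withDensity_apply _ (hs.prod MeasurableSet.univ),
    ← Measure.restrict_prod_eq_prod_univ, lintegral_prod _ hD.aemeasurable,
    lintegral_congr_ae (ae_restrict_of_ae h), lintegral_one, Measure.restrict_apply_univ]

lemma snd_withDensity_prod [SFinite P] [SFinite Q] {D : X × Y → ℝ≥0∞} (hD : Measurable D)
    (h : ∀ᵐ y ∂Q, ∫⁻ x, D (x, y) ∂P = 1) : ((P.prod Q).withDensity D).snd = Q := by
  ext s hs
  rw [Measure.snd_apply hs, ← Set.univ_prod, withDensity_apply _ (MeasurableSet.univ.prod hs),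
    ← Measure.prod_restrict, Measure.restrict_univ, lintegral_prod_symm _ hD.aemeasurable,
    lintegral_congr_ae (ae_restrict_of_ae h), lintegral_one, Measure.restrict_apply_univ]

lemma integral_add_comp_fst_snd {π : Measure (X × Y)} {F : X → ℝ} {G : Y → ℝ}
    (hF : Integrable F P) (hG : Integrable G Q) (hπP : π.fst = P) (hπQ : π.snd = Q) :
    ∫ p, F p.1 + G p.2 ∂π = ∫ x, F x ∂P + ∫ y, G y ∂Q := by
  subst hπP hπQ
  have hF' : Integrable (fun p : X × Y => F p.1) π := hF.comp_measurable measurable_fst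
  have hG' : Integrable (fun p : X × Y => G p.2) π := hG.comp_measurable measurable_snd
  rw [integral_add hF' hG', Measure.fst, Measure.snd,
    integral_map measurable_fst.aemeasurable hF.1, integral_map measurable_snd.aemeasurable hG.1]

lemma fst_qotMeasure_prod [SFinite P] [SFinite Q] {ε : ℝ} {φ ψ : X × Y → ℝ} (hε : 0 < ε)
    (hφ : Measurable φ) (hψ : Measurable ψ)
    (h : ∀ᵐ x ∂P, ∫ y, max (ψ (x, y) - φ (x, y)) 0 ∂Q = ε) :
    (qotMeasure (P.prod Q) ε φ ψ).fst = P := by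
  refine fst_withDensity_prod (measurable_qotDensity hφ hψ).ennreal_ofReal ?_
  filter_upwards [h] with x hx
  exact lintegral_ofReal_one_div_mul_eq_one hε (fun _ => le_max_right _ _) hx

lemma snd_qotMeasure_prod [SFinite P] [SFinite Q] {ε : ℝ} {φ ψ : X × Y → ℝ} (hε : 0 < ε)
    (hφ : Measurable φ) (hψ : Measurable ψ)
    (h : ∀ᵐ y ∂Q, ∫ x, max (ψ (x, y) - φ (x, y)) 0 ∂P = ε) :
    (qotMeasure (P.prod Q) ε φ ψ).snd = Q := by
  refine snd_withDensity_prod (measurable_qotDensity hφ hψ).ennreal_ofReal ?_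
  filter_upwards [h] with y hy
  exact lintegral_ofReal_one_div_mul_eq_one hε (fun _ => le_max_right _ _) hy

end Marginals

theorem piEps_is_unique_primal_minimizer_general
    (d : ℕ) (ε : ℝ) (hε : 0 < ε)
    (Ω Ω' : Set (EuclideanSpace ℝ (Fin d)))
    (hΩc : IsCompact Ω)
    (hΩ'c : IsCompact Ω')
    (P Q : Measure (EuclideanSpace ℝ (Fin d)))
    [IsProbabilityMeasure P] [IsProbabilityMeasure Q]
    (ρ : EuclideanSpace ℝ (Fin d) → ℝ)
    (hPdef : P = (volume.restrict Ω).withDensity fun x => ENNReal.ofReal (ρ x))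
    (hQsupp : Q Ω'ᶜ = 0)
    (c : EuclideanSpace ℝ (Fin d) → EuclideanSpace ℝ (Fin d) → ℝ)
    (L : ℝ)
    (hc : LipschitzWith (Real.toNNReal L) (Function.uncurry c))
    (fStar gStar : EuclideanSpace ℝ (Fin d) → ℝ)
    (hfsLip : LipschitzOnWith (Real.toNNReal L) fStar Ω)
    (hgsLip : LipschitzOnWith (Real.toNNReal L) gStar Ω')
    (hFOC1 : ∀ x ∈ Ω, ∫ y, max (fStar x + gStar y - c x y) 0 ∂Q = ε)
    (hFOC2 : ∀ y ∈ Ω', ∫ x, max (fStar x + gStar y - c x y) 0 ∂P = ε) :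
    IsFeasible P Q (piEps ε P Q c fStar gStar) ∧
    (∀ π, IsFeasible P Q π →
      primalCost ε P Q c (piEps ε P Q c fStar gStar) ≤ primalCost ε P Q c π) ∧
    (∀ π, IsFeasible P Q π →
      primalCost ε P Q c π = primalCost ε P Q c (piEps ε P Q c fStar gStar) →
      π = piEps ε P Q c fStar gStar) := by
  obtain ⟨F, hF, hFeq⟩ := hfsLip.extend_real
  obtain ⟨G, hG, hGeq⟩ := hgsLip.extend_real
  set φ := Function.uncurry c
  set ψ : EuclideanSpace ℝ (Fin d) × EuclideanSpace ℝ (Fin d) → ℝ := fun p => F p.1 + G p.2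
  have hψc : Continuous ψ :=
    (hF.continuous.comp continuous_fst).add (hG.continuous.comp continuous_snd)
  have hP : ∀ᵐ x ∂P, x ∈ Ω :=
    hPdef ▸ (withDensity_absolutelyContinuous _ _).ae_le (ae_restrict_mem hΩc.measurableSet)
  have hQ : ∀ᵐ y ∂Q, y ∈ Ω' := ae_iff.2 hQsupp
  have hμ : ∀ᵐ p ∂P.prod Q, p ∈ Ω ×ˢ Ω' :=
    (Measure.quasiMeasurePreserving_fst.ae hP).and (Measure.quasiMeasurePreserving_snd.ae hQ)
  have hφ := hc.continuous.memLp_top_of_ae_mem_compact (hΩc.prod hΩ'c) hμ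
  have hψ := hψc.memLp_top_of_ae_mem_compact (hΩc.prod hΩ'c) hμ
  have hψ_eq : ∀ x ∈ Ω, ∀ y ∈ Ω',
      max (ψ (x, y) - φ (x, y)) 0 = max (fStar x + gStar y - c x y) 0 :=
    fun x hx y hy => by rw [hFeq hx, hGeq hy]; rfl
  have hpi : piEps ε P Q c fStar gStar = qotMeasure (P.prod Q) ε φ ψ :=
    withDensity_congr_ae <| hμ.mono fun p hp =>
      congrArg (fun t => ENNReal.ofReal (1 / ε * t)) (hψ_eq _ hp.1 _ hp.2).symm
  have hfst := fst_qotMeasure_prod hε hc.continuous.measurable hψc.measurable <| hP.mono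
    fun x hx => (integral_congr_ae (hQ.mono (hψ_eq x hx))).trans (hFOC1 x hx)
  have hsnd := snd_qotMeasure_prod hε hc.continuous.measurable hψc.measurable <| hQ.mono
    fun y hy => (integral_congr_ae (hP.mono fun x hx => hψ_eq x hx y hy)).trans (hFOC2 y hy)
  have hFint := (hF.continuous.memLp_top_of_ae_mem_compact hΩc hP).integrable le_top
  have hGint := (hG.continuous.memLp_top_of_ae_mem_compact hΩ'c hQ).integrable le_top
  have hψπ : ∀ π : Measure _, π.fst = P → π.snd = Q →
      ∫ p, ψ p ∂π = ∫ p, ψ p ∂qotMeasure (P.prod Q) ε φ ψ := fun π hπP hπQ =>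
    (integral_add_comp_fst_snd hFint hGint hπP hπQ).trans
      (integral_add_comp_fst_snd hFint hGint hfst hsnd).symm
  rw [hpi]
  refine ⟨⟨⟨by rw [← Measure.fst_univ, hfst, measure_univ]⟩, hfst, hsnd,
    withDensity_absolutelyContinuous _ _, memLp_rnDeriv_qotMeasure hε.le hφ hψ⟩, ?_, ?_⟩
  · rintro π ⟨_, hπP, hπQ, hπ, hr⟩
    exact quadCost_qotMeasure_le hε hφ hψ hπ hr (hψπ π hπP hπQ)
  · rintro π ⟨_, hπP, hπQ, hπ, hr⟩ h
    exact eq_qotMeasure_of_quadCost_eq hε hφ hψ hπ hr (hψπ π hπP hπQ) h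

/-- The measure with density `(1/ε)(f*+g*-c)₊` w.r.t. `P ⊗ Q` is a coupling of `(P,Q)` and is
the unique minimizer of the primal quadratically regularized optimal transport problem. -/
theorem piEps_is_unique_primal_minimizer
    (d : ℕ) (hd : 1 ≤ d) (ε : ℝ) (hε : 0 < ε)
    (Ω Ω' : Set (EuclideanSpace ℝ (Fin d)))
    (hΩc : IsCompact Ω) (hΩconv : Convex ℝ Ω) (hΩne : Ω.Nonempty)
    (hΩ'c : IsCompact Ω') (hΩ'ne : Ω'.Nonempty)
    (P Q : Measure (EuclideanSpace ℝ (Fin d)))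
    [IsProbabilityMeasure P] [IsProbabilityMeasure Q]
    (ρ : EuclideanSpace ℝ (Fin d) → ℝ) (hρm : Measurable ρ)
    (lamP LamP : ℝ) (hlam : 0 < lamP)
    (hPdef : P = (volume.restrict Ω).withDensity fun x => ENNReal.ofReal (ρ x))
    (hρlb : ∀ x ∈ Ω, lamP ≤ ρ x) (hρub : ∀ x ∈ Ω, ρ x ≤ LamP)
    (hQsupp : Q Ω'ᶜ = 0)
    (c : EuclideanSpace ℝ (Fin d) → EuclideanSpace ℝ (Fin d) → ℝ)
    (L : ℝ) (hL : 0 < L)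
    (hc : LipschitzWith (Real.toNNReal L) (Function.uncurry c))
    (fStar gStar : EuclideanSpace ℝ (Fin d) → ℝ)
    (hfsLip : LipschitzOnWith (Real.toNNReal L) fStar Ω)
    (hgsLip : LipschitzOnWith (Real.toNNReal L) gStar Ω')
    (hFOC1 : ∀ x ∈ Ω, ∫ y, max (fStar x + gStar y - c x y) 0 ∂Q = ε)
    (hFOC2 : ∀ y ∈ Ω', ∫ x, max (fStar x + gStar y - c x y) 0 ∂P = ε) :
    IsFeasible P Q (piEps ε P Q c fStar gStar) ∧
    (∀ π, IsFeasible P Q π →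
      primalCost ε P Q c (piEps ε P Q c fStar gStar) ≤ primalCost ε P Q c π) ∧
    (∀ π, IsFeasible P Q π →
      primalCost ε P Q c π = primalCost ε P Q c (piEps ε P Q c fStar gStar) →
      π = piEps ε P Q c fStar gStar) :=
  piEps_is_unique_primal_minimizer_general d ε hε Ω Ω' hΩc hΩ'c P Q ρ hPdef hQsupp c L hc fStar
    gStar hfsLip hgsLip hFOC1 hFOC2
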